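/- Let (μ_n) be a uniformly integrable sequence of probability measures on ℝ converging weakly to a probability measure μ_∞ whose distribution function is strictly increasing. Let τ ∈ (0,1), let q_{τ,n} be any minimizer of q ↦ ∫ ρ_τ(y - q) dμ_n(y), and let q_{τ,∞} be the unique minimizer of q ↦ ∫ ρ_τ(y - q) dμ_∞(y). Then q_{τ,n} → q_{τ,∞} as n → ∞. -/

import Mathlib

open MeasureTheory Filter

/-- The pinball loss function ρ_τ(y) = y·(τ - 1_{y ≤ 0}). -/
noncomputable def pinball (τ y : ℝ) : ℝ := y * (τ - if y ≤ 0 then 1 else 0)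

/-!
The risk `R_μ(q) = ∫ ρ_τ(y - q) dμ(y)` is convex in `q`, and for `a ≤ b` its increment
`R_μ(b) - R_μ(a)` lies between `(b - a)(F(a) - τ)` and `(b - a)(F(b) - τ)`, `F` the distribution
function of `μ`. A minimizer `u` therefore has `F ≥ τ` to its right and a minimizer `v` has
`F ≤ τ` to its left, so a strictly increasing `F` leaves room for only one minimizer, and
`R_ν(q_∞) < R_ν(q_∞ ± ε)`. Since `|ρ_τ(y - q)| ≤ |y| + |q|`, uniform integrability upgrades weak
convergence to `R_{μ_n}(q) → R_ν(q)`, hence eventually `R_{μ_n}(q_∞) < R_{μ_n}(q_∞ ± ε)`, and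
convexity traps every minimizer of `R_{μ_n}` within `ε` of `q_∞`.
-/

open Set Topology

lemma ConvexOn.abs_sub_lt_of_isMinOn {f : ℝ → ℝ} (hf : ConvexOn ℝ univ f) {a x ε : ℝ}
    (hε : 0 < ε) (hlo : f a < f (a - ε)) (hhi : f a < f (a + ε)) (hx : IsMinOn f univ x) :
    |x - a| < ε := by
  have not_between : ∀ b, f a < f b → b ∉ Icc (min a x) (max a x) := fun b hb hmem =>
    (hf.le_on_segment (mem_univ a) (mem_univ x) ((segment_eq_Icc' a x).symm ▸ hmem)).not_gt
      (max_lt hb ((hx (mem_univ a)).trans_lt hb))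
  rw [abs_lt]
  constructor
  · by_contra! hxa
    exact not_between _ hlo ⟨min_le_of_right_le (by linarith), le_max_of_le_left (by linarith)⟩
  · by_contra! hxa
    exact not_between _ hhi ⟨min_le_of_left_le (by linarith), le_max_of_le_right (by linarith)⟩

lemma pinball_eq_max (τ y : ℝ) : pinball τ y = max (τ * y) ((τ - 1) * y) := by
  unfold pinball
  split_ifs with hy
  · rw [max_eq_right (by nlinarith)]; ring
  · rw [max_eq_left (by nlinarith)]; ring

lemma continuous_pinball (τ : ℝ) : Continuous (pinball τ) := by
  simp only [funext (pinball_eq_max τ)]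
  fun_prop

lemma convexOn_pinball (τ : ℝ) : ConvexOn ℝ univ (pinball τ) := by
  simp only [funext (pinball_eq_max τ)]
  exact ((LinearMap.mulLeft ℝ τ).convexOn convex_univ).sup
    ((LinearMap.mulLeft ℝ (τ - 1)).convexOn convex_univ)

lemma abs_pinball_le {τ : ℝ} (hτ : τ ∈ Icc (0 : ℝ) 1) (y : ℝ) : |pinball τ y| ≤ |y| := by
  obtain ⟨hτ0, hτ1⟩ := hτ
  rw [pinball_eq_max]
  refine abs_max_le_max_abs_abs.trans (max_le ?_ ?_) <;> rw [abs_mul]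
  · exact mul_le_of_le_one_left (abs_nonneg y) (abs_le.2 ⟨by linarith, hτ1⟩)
  · exact mul_le_of_le_one_left (abs_nonneg y) (abs_le.2 ⟨by linarith, by linarith⟩)

lemma abs_pinball_sub_le {τ : ℝ} (hτ : τ ∈ Icc (0 : ℝ) 1) (y q : ℝ) :
    |pinball τ (y - q)| ≤ |y| + |q| :=
  (abs_pinball_le hτ _).trans (abs_sub y q)

lemma pinball_sub_sub_pinball_sub_le (τ : ℝ) {a b : ℝ} (hab : a ≤ b) (y : ℝ) :
    pinball τ (y - b) - pinball τ (y - a) ≤ (b - a) * ((Iic b).indicator 1 y - τ) := by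
  simp only [pinball, indicator_apply, mem_Iic, Pi.one_apply]
  split_ifs <;> nlinarith

lemma le_pinball_sub_sub_pinball_sub (τ : ℝ) {a b : ℝ} (hab : a ≤ b) (y : ℝ) :
    (b - a) * ((Iic a).indicator 1 y - τ) ≤ pinball τ (y - b) - pinball τ (y - a) := by
  simp only [pinball, indicator_apply, mem_Iic, Pi.one_apply]
  split_ifs <;> nlinarith

lemma integrable_indicator_Iic_sub {m : Measure ℝ} [IsFiniteMeasure m] (c τ t : ℝ) :
    Integrable (fun y => c * ((Iic t).indicator 1 y - τ)) m :=
  (((integrable_const (1 : ℝ)).indicator measurableSet_Iic).sub (integrable_const τ)).const_mul c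

lemma integral_indicator_Iic_sub {m : Measure ℝ} [IsProbabilityMeasure m] (c τ t : ℝ) :
    ∫ y, c * ((Iic t).indicator 1 y - τ) ∂m = c * (m.real (Iic t) - τ) := by
  rw [integral_const_mul, integral_sub (f := (Iic t).indicator 1)
    ((integrable_const (1 : ℝ)).indicator measurableSet_Iic) (integrable_const τ),
    integral_indicator_one measurableSet_Iic]
  simp

noncomputable def pinballRisk (τ : ℝ) (m : Measure ℝ) (q : ℝ) : ℝ := ∫ y, pinball τ (y - q) ∂m

section PinballRisk

variable {τ : ℝ} {m : Measure ℝ}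

lemma integrable_pinball_sub [IsFiniteMeasure m] (hτ : τ ∈ Icc (0 : ℝ) 1)
    (hm : Integrable (fun x : ℝ => x) m) (q : ℝ) : Integrable (fun y => pinball τ (y - q)) m :=
  Integrable.mono' (hm.abs.add (integrable_const |q|))
    ((continuous_pinball τ).comp (continuous_sub_right q)).aestronglyMeasurable
    (ae_of_all _ (abs_pinball_sub_le hτ · q))

lemma convexOn_pinballRisk [IsFiniteMeasure m] (hτ : τ ∈ Icc (0 : ℝ) 1)
    (hm : Integrable (fun x : ℝ => x) m) : ConvexOn ℝ univ (pinballRisk τ m) := by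
  refine ⟨convex_univ, fun q₁ _ q₂ _ a b ha hb hab => ?_⟩
  have hq₁ := integrable_pinball_sub hτ hm q₁
  have hq₂ := integrable_pinball_sub hτ hm q₂
  simp only [pinballRisk, smul_eq_mul, ← integral_const_mul,
    ← integral_add (hq₁.const_mul a) (hq₂.const_mul b)]
  refine integral_mono (integrable_pinball_sub hτ hm _) ((hq₁.const_mul a).add (hq₂.const_mul b))
    fun y => ?_
  have hy : y - (a * q₁ + b * q₂) = a • (y - q₁) + b • (y - q₂) := by
    simp only [smul_eq_mul]; linear_combination y * hab.symm
  simpa only [hy, smul_eq_mul] using (convexOn_pinball τ).2 (mem_univ _) (mem_univ _) ha hb hab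

lemma pinballRisk_sub_pinballRisk_le [IsProbabilityMeasure m] (hτ : τ ∈ Icc (0 : ℝ) 1)
    (hm : Integrable (fun x : ℝ => x) m) {a b : ℝ} (hab : a ≤ b) :
    pinballRisk τ m b - pinballRisk τ m a ≤ (b - a) * (m.real (Iic b) - τ) := by
  rw [pinballRisk, pinballRisk, ← integral_sub (integrable_pinball_sub hτ hm b)
    (integrable_pinball_sub hτ hm a), ← integral_indicator_Iic_sub]
  exact integral_mono ((integrable_pinball_sub hτ hm b).sub (integrable_pinball_sub hτ hm a))
    (integrable_indicator_Iic_sub _ τ b) (pinball_sub_sub_pinball_sub_le τ hab)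

lemma le_pinballRisk_sub_pinballRisk [IsProbabilityMeasure m] (hτ : τ ∈ Icc (0 : ℝ) 1)
    (hm : Integrable (fun x : ℝ => x) m) {a b : ℝ} (hab : a ≤ b) :
    (b - a) * (m.real (Iic a) - τ) ≤ pinballRisk τ m b - pinballRisk τ m a := by
  rw [pinballRisk, pinballRisk, ← integral_sub (integrable_pinball_sub hτ hm b)
    (integrable_pinball_sub hτ hm a), ← integral_indicator_Iic_sub]
  exact integral_mono (integrable_indicator_Iic_sub _ τ a)
    ((integrable_pinball_sub hτ hm b).sub (integrable_pinball_sub hτ hm a))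
    (le_pinball_sub_sub_pinball_sub τ hab)

lemma le_real_Iic_of_isMinOn [IsProbabilityMeasure m] (hτ : τ ∈ Icc (0 : ℝ) 1)
    (hm : Integrable (fun x : ℝ => x) m) {u t : ℝ} (hu : IsMinOn (pinballRisk τ m) univ u)
    (hut : u < t) : τ ≤ m.real (Iic t) := by
  have h := (sub_nonneg.2 (hu (mem_univ t))).trans (pinballRisk_sub_pinballRisk_le hτ hm hut.le)
  linarith [(mul_nonneg_iff_of_pos_left (sub_pos.2 hut)).1 h]

lemma real_Iic_le_of_isMinOn [IsProbabilityMeasure m] (hτ : τ ∈ Icc (0 : ℝ) 1)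
    (hm : Integrable (fun x : ℝ => x) m) {v t : ℝ} (hv : IsMinOn (pinballRisk τ m) univ v)
    (htv : t < v) : m.real (Iic t) ≤ τ := by
  have h := (le_pinballRisk_sub_pinballRisk hτ hm htv.le).trans (sub_nonpos.2 (hv (mem_univ t)))
  linarith [nonpos_of_mul_nonpos_right h (sub_pos.2 htv)]

lemma not_lt_of_isMinOn_pinballRisk [IsProbabilityMeasure m] (hτ : τ ∈ Icc (0 : ℝ) 1)
    (hm : Integrable (fun x : ℝ => x) m) (hF : StrictMono fun t => m.real (Iic t)) {u v : ℝ}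
    (hu : IsMinOn (pinballRisk τ m) univ u) (hv : IsMinOn (pinballRisk τ m) univ v) : ¬u < v :=
  fun huv => (hF (show (2 * u + v) / 3 < (u + 2 * v) / 3 by linarith)).not_ge
    ((real_Iic_le_of_isMinOn hτ hm hv (by linarith)).trans
      (le_real_Iic_of_isMinOn hτ hm hu (by linarith)))

lemma pinballRisk_lt_of_ne [IsProbabilityMeasure m] (hτ : τ ∈ Icc (0 : ℝ) 1)
    (hm : Integrable (fun x : ℝ => x) m) (hF : StrictMono fun t => m.real (Iic t)) {q₀ q : ℝ}
    (hq₀ : IsMinOn (pinballRisk τ m) univ q₀) (hne : q ≠ q₀) :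
    pinballRisk τ m q₀ < pinballRisk τ m q := by
  by_contra! hle
  have hq : IsMinOn (pinballRisk τ m) univ q := fun r hr => hle.trans (hq₀ hr)
  exact hne.lt_or_gt.elim (not_lt_of_isMinOn_pinballRisk hτ hm hF hq hq₀)
    (not_lt_of_isMinOn_pinballRisk hτ hm hF hq₀ hq)

end PinballRisk

noncomputable def tailMoment (m : Measure ℝ) (α : ℝ) : ℝ := ∫ x in {x | α ≤ |x|}, |x| ∂m

section TailMoment

variable {m : Measure ℝ}

lemma measurableSet_le_abs (α : ℝ) : MeasurableSet {x : ℝ | α ≤ |x|} :=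
  measurableSet_le measurable_const measurable_abs

lemma tailMoment_antitone (hm : Integrable (fun x : ℝ => x) m) : Antitone (tailMoment m) :=
  fun _ _ hαβ => setIntegral_mono_set hm.abs.integrableOn (ae_of_all _ fun x => abs_nonneg x)
    (ae_of_all _ fun _ hx => hαβ.trans hx)

lemma tendsto_tailMoment_atTop (hm : Integrable (fun x : ℝ => x) m) :
    Tendsto (tailMoment m) atTop (𝓝 0) := by
  have hempty : (⋂ α : ℝ, {x : ℝ | α ≤ |x|}) = ∅ :=
    eq_empty_of_forall_notMem fun x hx => (lt_add_one |x|).not_ge (mem_iInter.1 hx (|x| + 1))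
  unfold tailMoment
  simpa [hempty] using tendsto_setIntegral_of_antitone (f := fun x => |x|) measurableSet_le_abs
    (fun _ _ hαβ _ hx => hαβ.trans hx) ⟨0, hm.abs.integrableOn⟩

lemma abs_sub_clamp_le {M : ℝ} (hM : 0 ≤ M) (x : ℝ) : |x - max (-M) (min M x)| ≤ |x| := by
  rcases le_total x (-M) with hx | hx
  · rw [min_eq_right (by linarith), max_eq_left hx, abs_of_nonpos (by linarith),
      abs_of_nonpos (by linarith)]
    linarith
  rcases le_total x M with hx' | hx'
  · simp [min_eq_right hx', max_eq_right hx]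
  · rw [min_eq_left hx', max_eq_right (by linarith), abs_of_nonneg (by linarith),
      abs_of_nonneg (by linarith)]
    linarith

lemma abs_clamp_le {M : ℝ} (hM : 0 ≤ M) (x : ℝ) : |max (-M) (min M x)| ≤ M :=
  abs_le.2 ⟨le_max_left _ _, max_le (by linarith) (min_le_left _ _)⟩

lemma clamp_eq_self {M x : ℝ} (hx : |x| ≤ M) : max (-M) (min M x) = x := by
  rw [min_eq_right (abs_le.1 hx).2, max_eq_right (abs_le.1 hx).1]

/-- On `|y| < α` the growth bound keeps `g` within `[-M, M]`, so clamping only changes it on the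
tail. -/
lemma dist_integral_integral_clamp_le [IsFiniteMeasure m] (hm : Integrable (fun x : ℝ => x) m)
    {g : ℝ → ℝ} (hg : Continuous g) {C c α M : ℝ} (hC : 0 ≤ C) (hc : 0 ≤ c) (hcα : c ≤ α)
    (hαM : C * α + c ≤ M) (hgrowth : ∀ y, |g y| ≤ C * |y| + c) :
    dist (∫ y, g y ∂m) (∫ y, max (-M) (min M (g y)) ∂m) ≤ (C + 1) * tailMoment m α := by
  have hM : 0 ≤ M := (add_nonneg (mul_nonneg hC (hc.trans hcα)) hc).trans hαM
  have hgi : Integrable g m := Integrable.mono' ((hm.abs.const_mul C).add (integrable_const c))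
    hg.aestronglyMeasurable (ae_of_all _ hgrowth)
  have hhi : Integrable (fun y => max (-M) (min M (g y))) m :=
    Integrable.mono' (integrable_const M) (by fun_prop) (ae_of_all _ fun y => abs_clamp_le hM _)
  have hpoint : ∀ y, |g y - max (-M) (min M (g y))|
      ≤ {x : ℝ | α ≤ |x|}.indicator (fun x => (C + 1) * |x|) y := by
    intro y
    by_cases hy : α ≤ |y|
    · rw [indicator_of_mem (show y ∈ {x : ℝ | α ≤ |x|} from hy)]
      linarith [abs_sub_clamp_le hM (g y), hgrowth y]
    · rw [indicator_of_notMem (show y ∉ {x : ℝ | α ≤ |x|} from hy),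
        clamp_eq_self ((hgrowth y).trans (by nlinarith)), sub_self, abs_zero]
  rw [Real.dist_eq, ← integral_sub hgi hhi, tailMoment, ← integral_const_mul,
    ← integral_indicator (measurableSet_le_abs α)]
  exact abs_integral_le_integral_abs.trans (integral_mono (hgi.sub hhi).abs
    ((hm.abs.const_mul _).indicator (measurableSet_le_abs α)) hpoint)

end TailMoment

section UniformIntegrability

variable {μ : ℕ → Measure ℝ} [∀ n, IsFiniteMeasure (μ n)] {ν : Measure ℝ} [IsFiniteMeasure ν]

theorem tendsto_integral_of_uniformIntegrable (hint : ∀ n, Integrable (fun x : ℝ => x) (μ n))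
    (hintν : Integrable (fun x : ℝ => x) ν) (hUI : ∀ δ > 0, ∃ α : ℝ, ∀ n, tailMoment (μ n) α < δ)
    (hweak : ∀ f : ℝ → ℝ, Continuous f → (∃ C, ∀ x, |f x| ≤ C) →
      Tendsto (fun n => ∫ x, f x ∂(μ n)) atTop (𝓝 (∫ x, f x ∂ν)))
    {g : ℝ → ℝ} (hg : Continuous g) {C c : ℝ} (hC : 0 ≤ C) (hc : 0 ≤ c)
    (hgrowth : ∀ y, |g y| ≤ C * |y| + c) :
    Tendsto (fun n => ∫ y, g y ∂(μ n)) atTop (𝓝 (∫ y, g y ∂ν)) := by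
  refine Metric.tendsto_atTop.2 fun ε hε => ?_
  obtain ⟨η, hη, hCη⟩ : ∃ η > 0, (C + 1) * η = ε / 3 :=
    ⟨ε / (3 * (C + 1)), by positivity, by field_simp⟩
  obtain ⟨α₀, hα₀⟩ := hUI η hη
  obtain ⟨α, hα₀α, hαν, hcα⟩ : ∃ α, α₀ ≤ α ∧ tailMoment ν α < η ∧ c ≤ α :=
    ((eventually_ge_atTop α₀).and (((tendsto_tailMoment_atTop hintν).eventually
      (gt_mem_nhds hη)).and (eventually_ge_atTop c))).exists
  set M := C * α + c with hMdef
  have hM : 0 ≤ M := add_nonneg (mul_nonneg hC (hc.trans hcα)) hc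
  set h : ℝ → ℝ := fun y => max (-M) (min M (g y))
  obtain ⟨N, hN⟩ := Metric.tendsto_atTop.1
    (hweak h (by fun_prop) ⟨M, fun y => abs_clamp_le hM _⟩) η hη
  refine ⟨N, fun n hn => ?_⟩
  have hμ : dist (∫ y, g y ∂(μ n)) (∫ y, h y ∂(μ n)) ≤ (C + 1) * η :=
    (dist_integral_integral_clamp_le (hint n) hg hC hc hcα hMdef.ge hgrowth).trans
      (mul_le_mul_of_nonneg_left ((tailMoment_antitone (hint n) hα₀α).trans (hα₀ n).le)
        (by linarith))
  have hν : dist (∫ y, h y ∂ν) (∫ y, g y ∂ν) ≤ (C + 1) * η := by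
    rw [dist_comm]
    exact (dist_integral_integral_clamp_le hintν hg hC hc hcα hMdef.ge hgrowth).trans
      (mul_le_mul_of_nonneg_left hαν.le (by linarith))
  have hη_le : η ≤ (C + 1) * η := le_mul_of_one_le_left hη.le (by linarith)
  linarith [dist_triangle4 (∫ y, g y ∂(μ n)) (∫ y, h y ∂(μ n)) (∫ y, h y ∂ν) (∫ y, g y ∂ν),
    hN n hn]

lemma tendsto_pinballRisk (hint : ∀ n, Integrable (fun x : ℝ => x) (μ n))
    (hintν : Integrable (fun x : ℝ => x) ν) (hUI : ∀ δ > 0, ∃ α : ℝ, ∀ n, tailMoment (μ n) α < δ)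
    (hweak : ∀ f : ℝ → ℝ, Continuous f → (∃ C, ∀ x, |f x| ≤ C) →
      Tendsto (fun n => ∫ x, f x ∂(μ n)) atTop (𝓝 (∫ x, f x ∂ν)))
    {τ : ℝ} (hτ : τ ∈ Icc (0 : ℝ) 1) (q : ℝ) :
    Tendsto (fun n => pinballRisk τ (μ n) q) atTop (𝓝 (pinballRisk τ ν q)) :=
  tendsto_integral_of_uniformIntegrable hint hintν hUI hweak
    ((continuous_pinball τ).comp (continuous_sub_right q)) zero_le_one (abs_nonneg q)
    fun y => by simpa using abs_pinball_sub_le hτ y q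

end UniformIntegrability

theorem quantile_minimizers_converge
    (μ : ℕ → Measure ℝ) [∀ n, IsProbabilityMeasure (μ n)]
    (ν : Measure ℝ) [IsProbabilityMeasure ν]
    (hint : ∀ n, Integrable (fun x : ℝ => x) (μ n))
    (hintν : Integrable (fun x : ℝ => x) ν)
    (hUI : ∀ δ > 0, ∃ α : ℝ, ∀ n, ∫ x in {x : ℝ | α ≤ |x|}, |x| ∂(μ n) < δ)
    (hweak : ∀ f : ℝ → ℝ, Continuous f → (∃ C, ∀ x, |f x| ≤ C) →
      Tendsto (fun n => ∫ x, f x ∂(μ n)) atTop (nhds (∫ x, f x ∂ν)))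
    (hmono : StrictMono (fun t => (ν (Set.Iic t)).toReal))
    (τ : ℝ) (hτ : τ ∈ Set.Ioo (0:ℝ) 1)
    (qn : ℕ → ℝ)
    (hqn : ∀ n, ∀ q : ℝ, ∫ y, pinball τ (y - qn n) ∂(μ n) ≤ ∫ y, pinball τ (y - q) ∂(μ n))
    (qlim : ℝ)
    (hqν : ∀ q : ℝ, ∫ y, pinball τ (y - qlim) ∂ν ≤ ∫ y, pinball τ (y - q) ∂ν) :
    Tendsto qn atTop (nhds qlim) := by
  have hτ' : τ ∈ Icc (0 : ℝ) 1 := Ioo_subset_Icc_self hτ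
  have hrisk := tendsto_pinballRisk hint hintν hUI hweak hτ'
  have hstrict : ∀ q ≠ qlim, pinballRisk τ ν qlim < pinballRisk τ ν q :=
    fun q => pinballRisk_lt_of_ne hτ' hintν hmono fun r _ => hqν r
  refine Metric.tendsto_nhds.2 fun ε hε => ?_
  filter_upwards [(hrisk qlim).eventually_lt (hrisk _) (hstrict (qlim - ε) (by linarith)),
    (hrisk qlim).eventually_lt (hrisk _) (hstrict (qlim + ε) (by linarith))] with n hlo hhi
  exact (convexOn_pinballRisk hτ' (hint n)).abs_sub_lt_of_isMinOn hε hlo hhi fun q _ => hqn n q
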